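/- arXiv:math/0605713 — 2 statements merged into one kernel-verified Lean document; each statement's English description precedes it below -/
import Mathlib

section
/- A hemiring S is h-hemiregular if and only if for every fuzzy right h-ideal μ and every fuzzy left h-ideal ν of S, the h-product μ∘ₕν equals μ∩ν. -/
open scoped BigOperators

variable {S : Type*}

def IsFuzzySet (μ : S → ℝ) : Prop := ∀ x, μ x ∈ Set.Icc (0:ℝ) 1

def IsFuzzyLeftHIdeal [NonUnitalSemiring S] (μ : S → ℝ) : Prop :=
  IsFuzzySet μ ∧
  (∀ x y : S, min (μ x) (μ y) ≤ μ (x + y)) ∧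
  (∀ x y : S, μ y ≤ μ (x * y)) ∧
  (∀ a b x z : S, x + a + z = b + z → min (μ a) (μ b) ≤ μ x)

def IsFuzzyRightHIdeal [NonUnitalSemiring S] (μ : S → ℝ) : Prop :=
  IsFuzzySet μ ∧
  (∀ x y : S, min (μ x) (μ y) ≤ μ (x + y)) ∧
  (∀ x y : S, μ x ≤ μ (x * y)) ∧
  (∀ a b x z : S, x + a + z = b + z → min (μ a) (μ b) ≤ μ x)

/-- The h-product of two fuzzy sets (equal to 0 when no representation exists). -/
noncomputable def hProd [NonUnitalSemiring S] (μ ν : S → ℝ) (x : S) : ℝ :=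
  sSup (insert 0 {r | ∃ a₁ b₁ a₂ b₂ z : S, x + a₁ * b₁ + z = a₂ * b₂ + z ∧
    r = min (min (μ a₁) (μ a₂)) (min (ν b₁) (ν b₂))})

def IsLeftHIdeal [NonUnitalSemiring S] (A : Set S) : Prop :=
  A.Nonempty ∧ (∀ a ∈ A, ∀ b ∈ A, a + b ∈ A) ∧ (∀ s : S, ∀ a ∈ A, s * a ∈ A) ∧
  (∀ x z a b : S, a ∈ A → b ∈ A → x + a + z = b + z → x ∈ A)

def IsRightHIdeal [NonUnitalSemiring S] (A : Set S) : Prop :=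
  A.Nonempty ∧ (∀ a ∈ A, ∀ b ∈ A, a + b ∈ A) ∧ (∀ s : S, ∀ a ∈ A, a * s ∈ A) ∧
  (∀ x z a b : S, a ∈ A → b ∈ A → x + a + z = b + z → x ∈ A)

/-- h-closure of a subset of a hemiring. -/
def hCl [NonUnitalSemiring S] (A : Set S) : Set S :=
  {x | ∃ a₁ ∈ A, ∃ a₂ ∈ A, ∃ z : S, x + a₁ + z = a₂ + z}

/-- AB : the set of finite (nonempty) sums of products ab, a ∈ A, b ∈ B. -/
def setProd [NonUnitalSemiring S] (A B : Set S) : Set S :=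
  {x | ∃ (n : ℕ) (a b : Fin (n + 1) → S), (∀ i, a i ∈ A) ∧ (∀ i, b i ∈ B) ∧
    x = ∑ i, a i * b i}

def IsPrimeLeftHIdeal [NonUnitalSemiring S] (P : Set S) : Prop :=
  IsLeftHIdeal P ∧ P ≠ Set.univ ∧
  ∀ A B : Set S, IsLeftHIdeal A → IsLeftHIdeal B → setProd A B ⊆ P → A ⊆ P ∨ B ⊆ P

def IsPrimeFuzzyLeftHIdeal [NonUnitalSemiring S] (ζ : S → ℝ) : Prop :=
  IsFuzzyLeftHIdeal ζ ∧ (∃ x y : S, ζ x ≠ ζ y) ∧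
  ∀ μ ν : S → ℝ, IsFuzzyLeftHIdeal μ → IsFuzzyLeftHIdeal ν →
    (∀ x, hProd μ ν x ≤ ζ x) → (∀ x, μ x ≤ ζ x) ∨ (∀ x, ν x ≤ ζ x)

def IsHHemiregular (S : Type*) [NonUnitalSemiring S] : Prop :=
  ∀ a : S, ∃ x₁ x₂ z : S, a + a * x₁ * a + z = a * x₂ * a + z

/-!
For `⇒`, the inequality `μ ∘ₕ ν ≤ μ ∩ ν` holds in every hemiring, and a hemiregularity relation
`x + x x₁ x + z = x x₂ x + z` is a representation `x + x (x₁ x) + z = x (x₂ x) + z` witnessing the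
reverse inequality. For `⇐`, apply the hypothesis to the characteristic functions of the principal
right and left h-ideals generated by `a`: their h-product is `1` at `a`, which puts `a` in the
h-closure of `ℕ a² + a S a`. Multiplying that relation on the left by `a` puts `a²`, and with it all
of `ℕ a² + a S a`, into the h-closure of `a S a`; as h-closure is idempotent, `a` lies there too.
-/

section HClosure

variable [NonUnitalSemiring S] {T T' : Set S}

theorem subset_hCl (h0 : (0 : S) ∈ T) : T ⊆ hCl T :=
  fun x hx => ⟨0, h0, x, hx, 0, by rw [add_zero]⟩

theorem add_mem_hCl (hT : ∀ x ∈ T, ∀ y ∈ T, x + y ∈ T) {x y : S} (hx : x ∈ hCl T)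
    (hy : y ∈ hCl T) : x + y ∈ hCl T := by
  obtain ⟨t₁, ht₁, t₂, ht₂, z, h⟩ := hx
  obtain ⟨u₁, hu₁, u₂, hu₂, w, h'⟩ := hy
  refine ⟨t₁ + u₁, hT _ ht₁ _ hu₁, t₂ + u₂, hT _ ht₂ _ hu₂, z + w, ?_⟩
  calc x + y + (t₁ + u₁) + (z + w) = (x + t₁ + z) + (y + u₁ + w) := by abel
    _ = t₂ + u₂ + (z + w) := by rw [h, h']; abel

theorem nsmul_mem_hCl (h0 : (0 : S) ∈ T) (hT : ∀ x ∈ T, ∀ y ∈ T, x + y ∈ T) {x : S}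
    (hx : x ∈ hCl T) (n : ℕ) : n • x ∈ hCl T := by
  induction n with
  | zero => rw [zero_smul]; exact subset_hCl h0 h0
  | succ n ih => rw [succ_nsmul]; exact add_mem_hCl hT ih hx

theorem mem_hCl_of_add_eq (hT : ∀ x ∈ T, ∀ y ∈ T, x + y ∈ T) {x p q z : S} (hp : p ∈ hCl T)
    (hq : q ∈ hCl T) (h : x + p + z = q + z) : x ∈ hCl T := by
  obtain ⟨t₁, ht₁, t₂, ht₂, z₁, hp⟩ := hp
  obtain ⟨u₁, hu₁, u₂, hu₂, z₂, hq⟩ := hq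
  refine ⟨t₂ + u₁, hT _ ht₂ _ hu₁, u₂ + t₁, hT _ hu₂ _ ht₁, z₁ + z₂ + z, ?_⟩
  calc x + (t₂ + u₁) + (z₁ + z₂ + z)
      = (p + t₁ + z₁) + (x + u₁ + z₂ + z) := by rw [hp]; abel
    _ = (x + p + z) + (t₁ + z₁ + u₁ + z₂) := by abel
    _ = (q + u₁ + z₂) + (t₁ + z₁ + z) := by rw [h]; abel
    _ = (u₂ + t₁) + (z₁ + z₂ + z) := by rw [hq]; abel

theorem mul_mem_hCl_right {s x : S} (h : ∀ t ∈ T, t * s ∈ T') (hx : x ∈ hCl T) :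
    x * s ∈ hCl T' := by
  obtain ⟨t₁, ht₁, t₂, ht₂, z, e⟩ := hx
  exact ⟨t₁ * s, h _ ht₁, t₂ * s, h _ ht₂, z * s, by simpa only [add_mul] using congrArg (· * s) e⟩

theorem mul_mem_hCl_left {s x : S} (h : ∀ t ∈ T, s * t ∈ T') (hx : x ∈ hCl T) :
    s * x ∈ hCl T' := by
  obtain ⟨t₁, ht₁, t₂, ht₂, z, e⟩ := hx
  exact ⟨s * t₁, h _ ht₁, s * t₂, h _ ht₂, s * z, by simpa only [mul_add] using congrArg (s * ·) e⟩

theorem isRightHIdeal_hCl (h0 : (0 : S) ∈ T) (hT : ∀ x ∈ T, ∀ y ∈ T, x + y ∈ T)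
    (hmul : ∀ t ∈ T, ∀ s, t * s ∈ T) : IsRightHIdeal (hCl T) :=
  ⟨⟨0, subset_hCl h0 h0⟩, fun _ hx _ hy => add_mem_hCl hT hx hy,
    fun s _ hx => mul_mem_hCl_right (fun t ht => hmul t ht s) hx,
    fun _ _ _ _ hp hq h => mem_hCl_of_add_eq hT hp hq h⟩

theorem isLeftHIdeal_hCl (h0 : (0 : S) ∈ T) (hT : ∀ x ∈ T, ∀ y ∈ T, x + y ∈ T)
    (hmul : ∀ t ∈ T, ∀ s, s * t ∈ T) : IsLeftHIdeal (hCl T) :=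
  ⟨⟨0, subset_hCl h0 h0⟩, fun _ hx _ hy => add_mem_hCl hT hx hy,
    fun s _ hx => mul_mem_hCl_left (fun t ht => hmul t ht s) hx,
    fun _ _ _ _ hp hq h => mem_hCl_of_add_eq hT hp hq h⟩

end HClosure

section Indicator

variable {A : Set S}

theorem indicator_one_le_of_imp {x y : S} (h : x ∈ A → y ∈ A) :
    A.indicator (1 : S → ℝ) x ≤ A.indicator 1 y := by
  by_cases hx : x ∈ A
  · simp [hx, h hx]
  · simp [hx, Set.indicator_apply_nonneg]

theorem min_indicator_one_le_of_imp {x y w : S} (h : x ∈ A → y ∈ A → w ∈ A) :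
    min (A.indicator (1 : S → ℝ) x) (A.indicator 1 y) ≤ A.indicator 1 w := by
  by_cases hx : x ∈ A
  · exact (min_le_right _ _).trans (indicator_one_le_of_imp (h hx))
  · exact (min_le_left _ _).trans (indicator_one_le_of_imp (absurd · hx))

theorem isFuzzySet_indicator_one (A : Set S) : IsFuzzySet (A.indicator (1 : S → ℝ)) :=
  fun x => by by_cases hx : x ∈ A <;> simp [hx]

variable [NonUnitalSemiring S]

theorem IsRightHIdeal.isFuzzyRightHIdeal_indicator (hA : IsRightHIdeal A) :
    IsFuzzyRightHIdeal (A.indicator 1) :=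
  ⟨isFuzzySet_indicator_one A, fun _ _ => min_indicator_one_le_of_imp (hA.2.1 _ · _),
    fun _ y => indicator_one_le_of_imp (hA.2.2.1 y _),
    fun _ _ _ _ h => min_indicator_one_le_of_imp (hA.2.2.2 _ _ _ _ · · h)⟩

theorem IsLeftHIdeal.isFuzzyLeftHIdeal_indicator (hA : IsLeftHIdeal A) :
    IsFuzzyLeftHIdeal (A.indicator 1) :=
  ⟨isFuzzySet_indicator_one A, fun _ _ => min_indicator_one_le_of_imp (hA.2.1 _ · _),
    fun x _ => indicator_one_le_of_imp (hA.2.2.1 x _),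
    fun _ _ _ _ h => min_indicator_one_le_of_imp (hA.2.2.2 _ _ _ _ · · h)⟩

end Indicator

section HProd

variable [NonUnitalSemiring S] {μ ν : S → ℝ} {x : S}

theorem hProd_le {c : ℝ} (hc : 0 ≤ c) (h : ∀ a₁ b₁ a₂ b₂ z : S, x + a₁ * b₁ + z = a₂ * b₂ + z →
      min (min (μ a₁) (μ a₂)) (min (ν b₁) (ν b₂)) ≤ c) :
    hProd μ ν x ≤ c := by
  refine csSup_le (Set.insert_nonempty _ _) ?_
  rintro r (rfl | ⟨a₁, b₁, a₂, b₂, z, hx, rfl⟩)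
  exacts [hc, h a₁ b₁ a₂ b₂ z hx]

theorem le_hProd (hμ : IsFuzzySet μ) {a₁ b₁ a₂ b₂ z : S} (hx : x + a₁ * b₁ + z = a₂ * b₂ + z) :
    min (min (μ a₁) (μ a₂)) (min (ν b₁) (ν b₂)) ≤ hProd μ ν x := by
  refine le_csSup ⟨1, ?_⟩ (Set.mem_insert_of_mem _ ⟨a₁, b₁, a₂, b₂, z, hx, rfl⟩)
  rintro r (rfl | ⟨a₁, b₁, a₂, b₂, z, -, rfl⟩)
  exacts [zero_le_one, (min_le_left _ _).trans ((min_le_left _ _).trans (hμ a₁).2)]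

theorem hProd_le_min (hμ : IsFuzzyRightHIdeal μ) (hν : IsFuzzyLeftHIdeal ν) :
    hProd μ ν x ≤ min (μ x) (ν x) := by
  refine hProd_le (le_min (hμ.1 x).1 (hν.1 x).1) fun a₁ b₁ a₂ b₂ z hx => le_min ?_ ?_
  · calc _ ≤ min (μ a₁) (μ a₂) := min_le_left _ _
      _ ≤ min (μ (a₁ * b₁)) (μ (a₂ * b₂)) := min_le_min (hμ.2.2.1 _ _) (hμ.2.2.1 _ _)
      _ ≤ μ x := hμ.2.2.2 _ _ _ _ hx
  · calc _ ≤ min (ν b₁) (ν b₂) := min_le_right _ _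
      _ ≤ min (ν (a₁ * b₁)) (ν (a₂ * b₂)) := min_le_min (hν.2.2.1 _ _) (hν.2.2.1 _ _)
      _ ≤ ν x := hν.2.2.2 _ _ _ _ hx

theorem min_le_hProd (hμ : IsFuzzySet μ) (hν : IsFuzzyLeftHIdeal ν)
    (hx : ∃ x₁ x₂ z : S, x + x * x₁ * x + z = x * x₂ * x + z) :
    min (μ x) (ν x) ≤ hProd μ ν x := by
  obtain ⟨x₁, x₂, z, h⟩ := hx
  simp only [mul_assoc] at h
  calc min (μ x) (ν x) ≤ min (min (μ x) (μ x)) (min (ν (x₁ * x)) (ν (x₂ * x))) := by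
        rw [min_self]; exact min_le_min le_rfl (le_min (hν.2.2.1 _ _) (hν.2.2.1 _ _))
    _ ≤ hProd μ ν x := le_hProd hμ h

theorem exists_of_hProd_indicator_pos {A B : Set S}
    (h : 0 < hProd (A.indicator 1) (B.indicator 1) x) :
    ∃ a₁ ∈ A, ∃ a₂ ∈ A, ∃ b₁ ∈ B, ∃ b₂ ∈ B, ∃ z, x + a₁ * b₁ + z = a₂ * b₂ + z := by
  by_contra! hne
  refine h.not_ge (hProd_le le_rfl fun a₁ b₁ a₂ b₂ z hx => ?_)
  by_cases ha₁ : a₁ ∈ A <;> by_cases ha₂ : a₂ ∈ A <;> by_cases hb₁ : b₁ ∈ B <;>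
    by_cases hb₂ : b₂ ∈ B <;> simp_all

end HProd

section PrincipalHIdeal

variable [NonUnitalSemiring S] {a : S}

/-- `hCl (rightIdealSpan a)` is the principal right h-ideal generated by `a`; the multiples `n • a`
are needed because `S` has no unit. -/
def rightIdealSpan (a : S) : Set S := {x | ∃ (n : ℕ) (s : S), x = n • a + a * s}

def leftIdealSpan (a : S) : Set S := {x | ∃ (n : ℕ) (s : S), x = n • a + s * a}

def rightLeftSpan (a : S) : Set S := {x | ∃ (k : ℕ) (w : S), x = k • (a * a) + a * w * a}

theorem zero_mem_rightIdealSpan (a : S) : (0 : S) ∈ rightIdealSpan a := ⟨0, 0, by simp⟩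

theorem zero_mem_leftIdealSpan (a : S) : (0 : S) ∈ leftIdealSpan a := ⟨0, 0, by simp⟩

theorem self_mem_rightIdealSpan (a : S) : a ∈ rightIdealSpan a := ⟨1, 0, by simp⟩

theorem self_mem_leftIdealSpan (a : S) : a ∈ leftIdealSpan a := ⟨1, 0, by simp⟩

theorem add_mem_rightIdealSpan :
    ∀ x ∈ rightIdealSpan a, ∀ y ∈ rightIdealSpan a, x + y ∈ rightIdealSpan a := by
  rintro _ ⟨n, s, rfl⟩ _ ⟨m, t, rfl⟩
  exact ⟨n + m, s + t, by rw [add_nsmul, mul_add]; abel⟩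

theorem add_mem_leftIdealSpan :
    ∀ x ∈ leftIdealSpan a, ∀ y ∈ leftIdealSpan a, x + y ∈ leftIdealSpan a := by
  rintro _ ⟨n, s, rfl⟩ _ ⟨m, t, rfl⟩
  exact ⟨n + m, s + t, by rw [add_nsmul, add_mul]; abel⟩

theorem add_mem_rightLeftSpan :
    ∀ x ∈ rightLeftSpan a, ∀ y ∈ rightLeftSpan a, x + y ∈ rightLeftSpan a := by
  rintro _ ⟨k, w, rfl⟩ _ ⟨l, w', rfl⟩
  exact ⟨k + l, w + w', by rw [add_nsmul, mul_add, add_mul]; abel⟩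

theorem mul_mem_rightIdealSpan : ∀ x ∈ rightIdealSpan a, ∀ s, x * s ∈ rightIdealSpan a := by
  rintro _ ⟨n, t, rfl⟩ s
  exact ⟨0, n • s + t * s, by simp only [zero_smul, zero_add, add_mul, mul_add, smul_mul_assoc,
    mul_smul_comm, mul_assoc]⟩

theorem mul_mem_leftIdealSpan : ∀ x ∈ leftIdealSpan a, ∀ s, s * x ∈ leftIdealSpan a := by
  rintro _ ⟨n, t, rfl⟩ s
  exact ⟨0, n • s + s * t, by simp only [zero_smul, zero_add, add_mul, mul_add, smul_mul_assoc,
    mul_smul_comm, mul_assoc]⟩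

theorem mul_mem_rightLeftSpan {t t' : S} (ht : t ∈ rightIdealSpan a) (ht' : t' ∈ leftIdealSpan a) :
    t * t' ∈ rightLeftSpan a := by
  obtain ⟨n, s, rfl⟩ := ht
  obtain ⟨m, s', rfl⟩ := ht'
  refine ⟨n * m, n • s' + m • s + s * s', ?_⟩
  simp only [add_mul, mul_add, smul_mul_assoc, mul_smul_comm, mul_assoc, mul_nsmul, smul_add]
  abel

theorem mul_mem_hCl_rightLeftSpan {u v : S} (hu : u ∈ hCl (rightIdealSpan a))
    (hv : v ∈ hCl (leftIdealSpan a)) : u * v ∈ hCl (rightLeftSpan a) := by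
  have hmul : ∀ t ∈ rightIdealSpan a, t * v ∈ hCl (rightLeftSpan a) :=
    fun t ht => mul_mem_hCl_left (fun _ ht' => mul_mem_rightLeftSpan ht ht') hv
  obtain ⟨t₁, ht₁, t₂, ht₂, z, h⟩ := hu
  exact mem_hCl_of_add_eq add_mem_rightLeftSpan (hmul t₁ ht₁) (hmul t₂ ht₂)
    (by simpa only [add_mul] using congrArg (· * v) h)

theorem mem_hCl_range_of_mem_hCl_rightLeftSpan (ha : a ∈ hCl (rightLeftSpan a)) :
    a ∈ hCl (Set.range fun w => a * w * a) := by
  set D := Set.range fun w => a * w * a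
  have hD : ∀ x ∈ D, ∀ y ∈ D, x + y ∈ D := by
    rintro _ ⟨w, rfl⟩ _ ⟨w', rfl⟩
    exact ⟨w + w', by simp only [mul_add, add_mul]⟩
  have h0 : (0 : S) ∈ D := ⟨0, by simp⟩
  have hsq : a * a ∈ hCl D := by
    refine mul_mem_hCl_left ?_ ha
    rintro _ ⟨k, w, rfl⟩
    exact ⟨k • a + a * w, by simp only [mul_add, add_mul, smul_mul_assoc, mul_smul_comm, mul_assoc]⟩
  have hC : ∀ c ∈ rightLeftSpan a, c ∈ hCl D := by
    rintro _ ⟨k, w, rfl⟩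
    exact add_mem_hCl hD (nsmul_mem_hCl h0 hD hsq k) (subset_hCl h0 ⟨w, rfl⟩)
  obtain ⟨c₁, hc₁, c₂, hc₂, z, h⟩ := ha
  exact mem_hCl_of_add_eq hD (hC c₁ hc₁) (hC c₂ hc₂) h

end PrincipalHIdeal

theorem hHemiregular_iff_hProd_eq_inter [NonUnitalSemiring S] :
    IsHHemiregular S ↔
      ∀ μ ν : S → ℝ, IsFuzzyRightHIdeal μ → IsFuzzyLeftHIdeal ν →
        ∀ x : S, hProd μ ν x = min (μ x) (ν x) := by
  refine ⟨fun hreg μ ν hμ hν x => (hProd_le_min hμ hν).antisymm (min_le_hProd hμ.1 hν (hreg x)),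
    fun H a => ?_⟩
  set R := hCl (rightIdealSpan a)
  set L := hCl (leftIdealSpan a)
  have hR : IsRightHIdeal R :=
    isRightHIdeal_hCl (zero_mem_rightIdealSpan a) add_mem_rightIdealSpan mul_mem_rightIdealSpan
  have hL : IsLeftHIdeal L :=
    isLeftHIdeal_hCl (zero_mem_leftIdealSpan a) add_mem_leftIdealSpan mul_mem_leftIdealSpan
  have haR : a ∈ R := subset_hCl (zero_mem_rightIdealSpan a) (self_mem_rightIdealSpan a)
  have haL : a ∈ L := subset_hCl (zero_mem_leftIdealSpan a) (self_mem_leftIdealSpan a)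
  have hpos : 0 < hProd (R.indicator 1) (L.indicator 1) a := by
    rw [H _ _ hR.isFuzzyRightHIdeal_indicator hL.isFuzzyLeftHIdeal_indicator,
      Set.indicator_of_mem haR, Set.indicator_of_mem haL]
    simp
  obtain ⟨u₁, hu₁, u₂, hu₂, v₁, hv₁, v₂, hv₂, z, h⟩ := exists_of_hProd_indicator_pos hpos
  have haC : a ∈ hCl (rightLeftSpan a) := mem_hCl_of_add_eq add_mem_rightLeftSpan
    (mul_mem_hCl_rightLeftSpan hu₁ hv₁) (mul_mem_hCl_rightLeftSpan hu₂ hv₂) h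
  obtain ⟨_, ⟨x₁, rfl⟩, _, ⟨x₂, rfl⟩, z, h⟩ := mem_hCl_range_of_mem_hCl_rightLeftSpan haC
  exact ⟨x₁, x₂, z, h⟩
end

section
/- Given a fuzzy left h-ideal μ of a hemiring S, the fuzzy set μ⁺ defined by μ⁺(x) = μ(x) + 1 − μ(0) is a normal fuzzy left h-ideal of S containing μ, and (μ⁺)⁺ = μ⁺. -/
open scoped BigOperators

variable {S : Type*}

namespace IsFuzzyLeftHIdeal

variable [NonUnitalSemiring S] {μ : S → ℝ}

theorem le_map_zero (hμ : IsFuzzyLeftHIdeal μ) (x : S) : μ x ≤ μ 0 := by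
  simpa using hμ.2.2.2 x x 0 x (by rw [zero_add])

theorem add_const (hμ : IsFuzzyLeftHIdeal μ) {c : ℝ} (hc : 0 ≤ c) (hc₁ : μ 0 + c ≤ 1) :
    IsFuzzyLeftHIdeal (fun x => μ x + c) := by
  refine ⟨fun x => ⟨?_, ?_⟩, fun x y => ?_, fun x y => ?_, fun a b x z hxz => ?_⟩
  · linarith [(hμ.1 x).1]
  · linarith [hμ.le_map_zero x]
  · simpa only [min_add_add_right] using add_le_add_left (hμ.2.1 x y) c
  · exact add_le_add_left (hμ.2.2.1 x y) c
  · simpa only [min_add_add_right] using add_le_add_left (hμ.2.2.2 a b x z hxz) c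

end IsFuzzyLeftHIdeal

theorem plus_normal_fuzzy_left_h_ideal [NonUnitalSemiring S] (μ : S → ℝ)
    (hμ : IsFuzzyLeftHIdeal μ) :
    IsFuzzyLeftHIdeal (fun x => μ x + 1 - μ 0) ∧
      (μ 0 + 1 - μ 0 = 1) ∧
      (∀ x, μ x ≤ μ x + 1 - μ 0) ∧
      (fun x => (μ x + 1 - μ 0) + 1 - (μ 0 + 1 - μ 0)) = (fun x => μ x + 1 - μ 0) := by
  have hμ0 : μ 0 ≤ 1 := (hμ.1 0).2
  refine ⟨?_, by ring, fun x => by linarith, by funext x; ring⟩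
  simpa only [add_sub_assoc] using hμ.add_const (sub_nonneg.mpr hμ0) (by linarith)
end
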